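/- arXiv:math/0605185 — 9 statements merged into one kernel-verified Lean document; each statement's English description precedes it below -/
import Mathlib

section
/- The map ψ : R_p → End(H_p) defined by ψ(A)(π(h)) = π(Ah) is a surjective ring homomorphism. -/
/-- The subring `R_p` of integer matrices with `p ^ (e i - e j) ∣ A i j` for `j ≤ i`. -/
def Rp (p n : ℕ) (e : Fin n → ℕ) (he : Monotone e) :
    Subring (Matrix (Fin n) (Fin n) ℤ) where
  carrier := {A | ∀ i j, j ≤ i → ((p : ℤ) ^ (e i - e j)) ∣ A i j}
  zero_mem' := by intro i j _; simp
  one_mem' := by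
    intro i j hji
    rcases eq_or_ne i j with rfl | hne
    · simp
    · simp [Matrix.one_apply, hne]
  add_mem' := by
    intro A B hA hB i j h
    simpa [Matrix.add_apply] using dvd_add (hA i j h) (hB i j h)
  neg_mem' := by
    intro A hA i j h
    simpa [Matrix.neg_apply] using (hA i j h).neg_right
  mul_mem' := by
    intro A B hA hB i j hji
    rw [Matrix.mul_apply]
    refine Finset.dvd_sum fun k _ => ?_
    rcases le_total k j with hk | hk
    · exact dvd_mul_of_dvd_left
        ((pow_dvd_pow _ (Nat.sub_le_sub_left (he hk) _)).trans (hA i k (hk.trans hji))) _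
    · rcases le_total k i with hki | hki
      · have h3 : (p : ℤ) ^ (e i - e j) ∣ (p : ℤ) ^ (e i - e k) * (p : ℤ) ^ (e k - e j) := by
          rw [← pow_add]
          apply pow_dvd_pow
          have := he hki; have := he hk; omega
        exact h3.trans (mul_dvd_mul (hA i k hki) (hB k j hk))
      · exact dvd_mul_of_dvd_right
          ((pow_dvd_pow _ (Nat.sub_le_sub_right (he hki) _)).trans (hB k j hk)) _

/-! An integer matrix `A` induces an endomorphism of `∏ ℤ/mᵢ` through the surjective reduction
`π : ℤⁿ → ∏ ℤ/mᵢ` exactly when it maps `ker π = ∏ mᵢℤ` into itself, i.e. when `mᵢ ∣ Aᵢⱼ mⱼ`.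
These matrices form a subring, on which `A ↦ (π h ↦ π (A h))` is a ring map since `π` is
surjective. It hits every endomorphism `φ`: take for the `j`-th column a lift of `φ (π eⱼ)`, which
is compatible because `mⱼ • π eⱼ = 0`. For `mᵢ = p ^ eᵢ` with `e` monotone, compatibility is
precisely the defining condition of `R_p`. -/

open Matrix

section

variable {ι : Type*} (m : ι → ℕ)

def intReduce : (ι → ℤ) →+ ∀ i, ZMod (m i) :=
  AddMonoidHom.pi fun i => (Int.castAddHom (ZMod (m i))).comp (Pi.evalAddMonoidHom _ i)

@[simp]
lemma intReduce_apply (h : ι → ℤ) (i : ι) : intReduce m h i = h i := rfl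

lemma intReduce_surjective : Function.Surjective (intReduce m) := fun x =>
  ⟨fun i => (x i).cast, funext fun i => ZMod.intCast_zmod_cast (x i)⟩

variable {m} in
lemma ext_of_intReduce {f g : AddMonoid.End (∀ i, ZMod (m i))}
    (hfg : ∀ h, f (intReduce m h) = g (intReduce m h)) : f = g :=
  AddMonoidHom.ext ((intReduce_surjective m).forall.2 hfg)

lemma nsmul_intReduce_single_one [DecidableEq ι] (j : ι) :
    m j • intReduce m (Pi.single j 1) = 0 := by
  funext i
  rcases eq_or_ne i j with rfl | hij
  · simp
  · simp [hij]

variable [Fintype ι] [DecidableEq ι]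

def compatibleMatrices : Subring (Matrix ι ι ℤ) where
  carrier := {A | ∀ i j, (m i : ℤ) ∣ A i j * m j}
  zero_mem' := by simp
  one_mem' i j := by
    rcases eq_or_ne i j with rfl | hij
    · simp
    · simp [one_apply_ne hij]
  add_mem' hA hB i j := by
    rw [Matrix.add_apply, add_mul]
    exact dvd_add (hA i j) (hB i j)
  neg_mem' hA i j := by
    rw [Matrix.neg_apply, neg_mul]
    exact (hA i j).neg_right
  mul_mem' {A B} hA hB i j := by
    rw [mul_apply, Finset.sum_mul]
    refine Finset.dvd_sum fun k _ => ?_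
    obtain ⟨c, hc⟩ := hB k j
    rw [mul_assoc, hc, ← mul_assoc]
    exact dvd_mul_of_dvd_left (hA i k) c

variable {m}

def zmodMulHom {a : ℤ} {i j : ι} (h : (m i : ℤ) ∣ a * m j) : ZMod (m j) →+ ZMod (m i) :=
  ZMod.lift (m j) ⟨(Int.castAddHom _).comp (AddMonoidHom.mulLeft a), by
    simpa using (CharP.intCast_eq_zero_iff (ZMod (m i)) (m i) _).2 h⟩

def reduceEnd (A : compatibleMatrices m) : AddMonoid.End (∀ i, ZMod (m i)) :=
  AddMonoidHom.pi fun i => ∑ j, (zmodMulHom (A.2 i j)).comp (Pi.evalAddMonoidHom _ j)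

lemma reduceEnd_intReduce (A : compatibleMatrices m) (h : ι → ℤ) :
    reduceEnd A (intReduce m h) = intReduce m ((A : Matrix ι ι ℤ) *ᵥ h) := by
  funext i
  change (∑ j, (zmodMulHom (A.2 i j)).comp (Pi.evalAddMonoidHom _ j)) (intReduce m h) = _
  simp [zmodMulHom, mulVec, dotProduct]

def reduceEndHom : compatibleMatrices m →+* AddMonoid.End (∀ i, ZMod (m i)) where
  toFun := reduceEnd
  map_one' := ext_of_intReduce fun h => by
    simp [reduceEnd_intReduce]
  map_mul' A B := ext_of_intReduce fun h => by
    simp [reduceEnd_intReduce, mulVec_mulVec]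
  map_zero' := ext_of_intReduce fun h => by
    simp [reduceEnd_intReduce]
  map_add' A B := ext_of_intReduce fun h => by
    change _ = reduceEnd A _ + reduceEnd B _
    simp [reduceEnd_intReduce, add_mulVec]

lemma reduceEndHom_surjective : Function.Surjective (reduceEndHom (m := m)) := by
  intro φ
  set ε : ι → ∀ i, ZMod (m i) := fun j => intReduce m (Pi.single j 1)
  set A : Matrix ι ι ℤ := fun i j => (φ (ε j) i).cast
  have hA : A ∈ compatibleMatrices m := fun i j => by
    rw [← CharP.intCast_eq_zero_iff (ZMod (m i)) (m i)]
    calc ((A i j * m j : ℤ) : ZMod (m i)) = (m j • φ (ε j)) i := by simp [A, mul_comm]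
      _ = 0 := by rw [← map_nsmul, nsmul_intReduce_single_one, map_zero]; rfl
  refine ⟨⟨A, hA⟩, (AddMonoidHom.cancel_right (intReduce_surjective m)).1 ?_⟩
  refine AddMonoidHom.functions_ext' _ _ _ fun j => AddMonoidHom.ext_int ?_
  funext i
  change reduceEnd _ (intReduce m (Pi.single j 1)) i = φ (intReduce m (Pi.single j 1)) i
  rw [reduceEnd_intReduce, intReduce_apply, mulVec_single_one]
  exact ZMod.intCast_zmod_cast _

end

lemma pow_dvd_mul_pow_iff {M₀ : Type*} [CommMonoidWithZero M₀] [IsCancelMulZero M₀]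
    {p x : M₀} {a b : ℕ} (hp : p ≠ 0) (hba : b ≤ a) : p ^ a ∣ x * p ^ b ↔ p ^ (a - b) ∣ x := by
  rw [← Nat.sub_add_cancel hba, pow_add, Nat.add_sub_cancel,
    mul_dvd_mul_iff_right (pow_ne_zero _ hp)]

lemma Rp_eq_compatibleMatrices {p n : ℕ} {e : Fin n → ℕ} (he : Monotone e) (hp : p ≠ 0) :
    Rp p n e he = compatibleMatrices fun i => p ^ e i := by
  ext A
  refine forall₂_congr fun i j => ?_
  push_cast
  rcases le_total j i with hji | hij
  · simp [hji, pow_dvd_mul_pow_iff (Int.natCast_ne_zero.2 hp) (he hji)]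
  · rw [Nat.sub_eq_zero_of_le (he hij), pow_zero]
    exact iff_of_true (fun _ => one_dvd _) (dvd_mul_of_dvd_right (pow_dvd_pow _ (he hij)) _)

theorem stmt_6_general (p n : ℕ) (hp : p.Prime) (e : Fin n → ℕ) (he : Monotone e) :
    ∃ ψ : Rp p n e he →+* AddMonoid.End (∀ i : Fin n, ZMod (p ^ e i)),
      (∀ A : Rp p n e he, ∀ h : Fin n → ℤ,
        ψ A (fun i => ((h i : ZMod (p ^ e i)))) =
          fun i => (((A : Matrix (Fin n) (Fin n) ℤ).mulVec h i : ℤ) : ZMod (p ^ e i))) ∧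
      Function.Surjective ψ := by
  let toCompatible := RingEquiv.subringCongr (Rp_eq_compatibleMatrices he hp.ne_zero)
  exact ⟨reduceEndHom.comp toCompatible.toRingHom,
    fun A h => reduceEnd_intReduce (toCompatible A) h,
    reduceEndHom_surjective.comp toCompatible.surjective⟩

/-- The map `ψ : R_p → End(H_p)`, `ψ A (π h) = π (A h)` (with
`π : ℤⁿ → H_p` coordinatewise reduction), is a surjective ring homomorphism. -/
theorem stmt_6 (p n : ℕ) (hp : p.Prime) (e : Fin n → ℕ)
    (he1 : ∀ i, 1 ≤ e i) (he : Monotone e) :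
    ∃ ψ : Rp p n e he →+* AddMonoid.End (∀ i : Fin n, ZMod (p ^ e i)),
      (∀ A : Rp p n e he, ∀ h : Fin n → ℤ,
        ψ A (fun i => ((h i : ZMod (p ^ e i)))) =
          fun i => (((A : Matrix (Fin n) (Fin n) ℤ).mulVec h i : ℤ) : ZMod (p ^ e i))) ∧
      Function.Surjective ψ :=
  stmt_6_general p n hp e he
end

section
/- Every endomorphism of H_p = ∏_{i=1}^n ℤ/p^{e_i}ℤ is induced by an integer matrix A = (a_{ij}) with p^{e_i - e_j} ∣ a_{ij} for all i ≥ j; i.e., the map ψ is surjective onto End(H_p). -/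
/-!
An additive map out of `∏ j, ℤ/N_jℤ` is determined by the images of the unit vectors `δ_j`;
lifting their coordinates to `ℤ` gives an integer matrix inducing it. Since `N_j δ_j = 0`, the
`i`-th coordinate of the image of `δ_j` is killed by `N_j` in `ℤ/N_iℤ`, i.e. `N_i ∣ N_j a_ij`.
For `N = p^e` with `e_j ≤ e_i` this is `p^(e_i - e_j) ∣ a_ij`.
-/

section ZModPi

variable {ι κ : Type*} [DecidableEq κ] {N : κ → ℕ} {N' : ι → ℕ}

def zmodPiMatrix (f : (∀ j, ZMod (N j)) →+ ∀ i, ZMod (N' i)) : Matrix ι κ ℤ :=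
  fun i j => (f (Pi.single j 1) i).cast

theorem intCast_pi_eq_sum_smul_single [Fintype κ] (h : κ → ℤ) :
    (fun j => (h j : ZMod (N j))) = ∑ j, h j • Pi.single j (1 : ZMod (N j)) := by
  conv_lhs => rw [← Finset.univ_sum_single (fun j => (h j : ZMod (N j)))]
  simp only [← Pi.single_smul, zsmul_one]

theorem map_intCast_pi_eq_mulVec [Fintype κ] (f : (∀ j, ZMod (N j)) →+ ∀ i, ZMod (N' i))
    (h : κ → ℤ) :
    f (fun j => (h j : ZMod (N j))) = fun i => ((zmodPiMatrix f).mulVec h i : ZMod (N' i)) := by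
  funext i
  rw [intCast_pi_eq_sum_smul_single, map_sum, Finset.sum_apply]
  simp only [Matrix.mulVec, dotProduct, Int.cast_sum]
  refine Finset.sum_congr rfl fun j _ => ?_
  rw [map_zsmul, Pi.smul_apply, zsmul_eq_mul, Int.cast_mul, mul_comm, zmodPiMatrix,
    ZMod.intCast_zmod_cast]

theorem dvd_natCast_mul_zmodPiMatrix (f : (∀ j, ZMod (N j)) →+ ∀ i, ZMod (N' i)) (i : ι) (j : κ) :
    (N' i : ℤ) ∣ N j * zmodPiMatrix f i j := by
  have hkill : (N j : ℤ) • Pi.single (M := fun j => ZMod (N j)) j 1 = 0 := by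
    rw [← Pi.single_smul, natCast_zsmul, nsmul_one, ZMod.natCast_self, Pi.single_zero]
  have hcoord := congrFun (congrArg f hkill) i
  rw [map_zsmul, map_zero, Pi.smul_apply, Pi.zero_apply, zsmul_eq_mul] at hcoord
  rw [← ZMod.intCast_zmod_eq_zero_iff_dvd, Int.cast_mul, zmodPiMatrix, ZMod.intCast_zmod_cast]
  exact_mod_cast hcoord

end ZModPi

theorem Int.pow_sub_dvd_of_pow_dvd_pow_mul {p a : ℤ} {k m : ℕ} (hp : p ≠ 0) (hkm : k ≤ m)
    (h : p ^ m ∣ p ^ k * a) : p ^ (m - k) ∣ a := by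
  rw [← pow_mul_pow_sub p hkm] at h
  exact (mul_dvd_mul_iff_left (pow_ne_zero k hp)).mp h

theorem stmt_7_general (p n : ℕ) (hp : p.Prime) (e : Fin n → ℕ)
    (he : Monotone e)
    (M : AddMonoid.End (∀ i : Fin n, ZMod (p ^ e i))) :
    ∃ A : Matrix (Fin n) (Fin n) ℤ,
      (∀ i j, j ≤ i → ((p : ℤ) ^ (e i - e j)) ∣ A i j) ∧
      ∀ h : Fin n → ℤ,
        M (fun i => ((h i : ZMod (p ^ e i)))) = fun i => ((A.mulVec h i : ℤ) : ZMod (p ^ e i)) := by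
  refine ⟨zmodPiMatrix M, fun i j hji => ?_, map_intCast_pi_eq_mulVec M⟩
  have hdvd := dvd_natCast_mul_zmodPiMatrix M i j
  push_cast at hdvd
  exact Int.pow_sub_dvd_of_pow_dvd_pow_mul (by exact_mod_cast hp.ne_zero) (he hji) hdvd

/-- Every endomorphism of `H_p = ∏ i, ℤ/p^(e i)ℤ` is induced by an integer
matrix `A` with `p ^ (e i - e j) ∣ A i j` for `i ≥ j`, i.e. `ψ` is surjective. -/
theorem stmt_7 (p n : ℕ) (hp : p.Prime) (e : Fin n → ℕ)
    (he1 : ∀ i, 1 ≤ e i) (he : Monotone e)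
    (M : AddMonoid.End (∀ i : Fin n, ZMod (p ^ e i))) :
    ∃ A : Matrix (Fin n) (Fin n) ℤ,
      (∀ i j, j ≤ i → ((p : ℤ) ^ (e i - e j)) ∣ A i j) ∧
      ∀ h : Fin n → ℤ,
        M (fun i => ((h i : ZMod (p ^ e i)))) = fun i => ((A.mulVec h i : ℤ) : ZMod (p ^ e i)) :=
  stmt_7_general p n hp e he M
end

section
/- The kernel of the ring homomorphism ψ : R_p → End(H_p) consists exactly of the matrices A = (a_{ij}) ∈ R_p such that p^{e_i} divides a_{ij} for all i, j. -/
/-- The kernel of the ring homomorphism `ψ : R_p → End(H_p)` (determined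
by `ψ A (π h) = π (A h)`) consists exactly of the matrices `A ∈ R_p` with
`p ^ (e i) ∣ A i j` for all `i, j`. -/
theorem stmt_9 (p n : ℕ) (hp : p.Prime) (e : Fin n → ℕ)
    (he1 : ∀ i, 1 ≤ e i) (he : Monotone e)
    (ψ : Rp p n e he →+* AddMonoid.End (∀ i : Fin n, ZMod (p ^ e i)))
    (hψ : ∀ A : Rp p n e he, ∀ h : Fin n → ℤ,
      ψ A (fun i => ((h i : ZMod (p ^ e i)))) =
        fun i => (((A : Matrix (Fin n) (Fin n) ℤ).mulVec h i : ℤ) : ZMod (p ^ e i))) :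
    ∀ A : Rp p n e he,
      ψ A = 0 ↔ ∀ i j, ((p : ℤ) ^ e i) ∣ (A : Matrix (Fin n) (Fin n) ℤ) i j := by
  intro A
  constructor
  · intro h0 i j
    have hh := hψ A (Pi.single j 1)
    rw [h0] at hh
    have hm : (A : Matrix (Fin n) (Fin n) ℤ).mulVec (Pi.single j 1) i
        = (A : Matrix (Fin n) (Fin n) ℤ) i j := by
      simp [Matrix.mulVec_single]
    have := congrFun hh.symm i
    rw [hm] at this
    have hz : ((A : Matrix (Fin n) (Fin n) ℤ) i j : ZMod (p ^ e i)) = 0 := by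
      simpa using this
    have := (ZMod.intCast_zmod_eq_zero_iff_dvd _ _).mp hz
    simpa [Int.natCast_pow] using this
  · intro hdvd
    refine DFunLike.ext _ _ fun x => ?_
    show ψ A x = 0
    haveI : ∀ i : Fin n, NeZero (p ^ e i) := fun i =>
      ⟨pow_ne_zero _ hp.ne_zero⟩
    have hx : (fun i => (((x i).val : ℤ) : ZMod (p ^ e i))) = x := by
      funext i
      simp [ZMod.natCast_val]
    have := hψ A (fun i => ((x i).val : ℤ))
    rw [hx] at this
    rw [this]
    funext i
    have : ((p : ℤ) ^ e i) ∣ (A : Matrix (Fin n) (Fin n) ℤ).mulVec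
        (fun i => ((x i).val : ℤ)) i := by
      rw [Matrix.mulVec, dotProduct]
      apply Finset.dvd_sum
      intro k _
      exact dvd_mul_of_dvd_left (hdvd i k) _
    have hz := (ZMod.intCast_zmod_eq_zero_iff_dvd
      ((A : Matrix (Fin n) (Fin n) ℤ).mulVec (fun i => ((x i).val : ℤ)) i) (p ^ e i)).mpr
      (by simpa [Int.natCast_pow] using this)
    simpa using hz
end

section
/- If A ∈ R_p has nonzero determinant, then its adjugate matrix B (the unique integer matrix with AB = BA = det(A)·I) also lies in R_p. -/
/-- If `A ∈ R_p` has nonzero determinant, then its adjugate (the unique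
integer matrix `B` with `A * B = B * A = det A • I`) also lies in `R_p`. -/
theorem stmt_11 (p n : ℕ) (hp : p.Prime) (e : Fin n → ℕ)
    (he1 : ∀ i, 1 ≤ e i) (he : Monotone e)
    (A : Matrix (Fin n) (Fin n) ℤ)
    (hA : ∀ i j, j ≤ i → ((p : ℤ) ^ (e i - e j)) ∣ A i j)
    (hdet : A.det ≠ 0) :
    ∀ i j, j ≤ i → ((p : ℤ) ^ (e i - e j)) ∣ A.adjugate i j := by
  have hA' : ∀ k l, ((p : ℤ) ^ (e k - e l)) ∣ A k l := by
    intro k l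
    rcases le_total l k with h | h
    · exact hA k l h
    · have : e k - e l = 0 := Nat.sub_eq_zero_of_le (he h)
      simp [this]
  intro i j hij
  rw [Matrix.adjugate_apply, Matrix.det_apply]
  apply Finset.dvd_sum
  intro σ _
  set B := A.updateRow j (Pi.single i 1) with hB
  by_cases hσ : σ i = j
  · rw [Units.smul_def]
    apply Dvd.dvd.mul_left
    rw [← Finset.mul_prod_erase Finset.univ _ (Finset.mem_univ i)]
    have hBi : B (σ i) i = 1 := by
      rw [hσ, hB, Matrix.updateRow_self, Pi.single_eq_same]
    rw [hBi, one_mul]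
    have hsum : (e i - e j) ≤ ∑ k ∈ Finset.univ.erase i, (e (σ k) - e k) := by
      have h1 : ∑ k ∈ Finset.univ.erase i, ((e (σ k) : ℤ) - e k)
          = (e i : ℤ) - e j := by
        rw [Finset.sum_sub_distrib,
          Finset.sum_erase_eq_sub (Finset.mem_univ i),
          Finset.sum_erase_eq_sub (Finset.mem_univ i),
          Equiv.sum_comp σ (fun k => (e k : ℤ)), hσ]
        ring
      have h2 : ∑ k ∈ Finset.univ.erase i, ((e (σ k) : ℤ) - e k)
          ≤ ∑ k ∈ Finset.univ.erase i, ((e (σ k) - e k : ℕ) : ℤ) := by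
        apply Finset.sum_le_sum
        intro k _
        omega
      have h3 : ((e i - e j : ℕ) : ℤ) = (e i : ℤ) - e j := by
        have := he hij
        omega
      have := h1 ▸ h2
      rw [← h3] at this
      rw [← Nat.cast_sum] at this
      exact_mod_cast this
    calc ((p : ℤ)) ^ (e i - e j)
        ∣ (p : ℤ) ^ (∑ k ∈ Finset.univ.erase i, (e (σ k) - e k)) :=
          pow_dvd_pow _ hsum
      _ = ∏ k ∈ Finset.univ.erase i, (p : ℤ) ^ (e (σ k) - e k) := by
          rw [Finset.prod_pow_eq_pow_sum]
      _ ∣ ∏ k ∈ Finset.univ.erase i, B (σ k) k := by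
          apply Finset.prod_dvd_prod_of_dvd
          intro k hk
          have hk' : k ≠ i := (Finset.mem_erase.mp hk).1
          have : σ k ≠ j := by
            intro h
            exact hk' (σ.injective (h.trans hσ.symm))
          rw [hB, Matrix.updateRow_ne this]
          exact hA' (σ k) k
  · have hzero : ∏ k : Fin n, B (σ k) k = 0 := by
      apply Finset.prod_eq_zero (Finset.mem_univ (σ.symm j))
      have h1 : σ (σ.symm j) = j := σ.apply_symm_apply j
      have h2 : σ.symm j ≠ i := by
        intro h
        exact hσ (h ▸ h1)
      rw [h1, hB, Matrix.updateRow_self, Pi.single_eq_of_ne h2]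
    rw [hzero, smul_zero]
    exact dvd_zero _
end

section
/- For A ∈ R_p, the endomorphism ψ(A) of H_p is an automorphism if and only if det(A) is not divisible by p (equivalently, A mod p lies in GL_n(F_p)). -/
lemma mulVec_cast (n : ℕ) (M : Matrix (Fin n) (Fin n) ℤ) (h : Fin n → ℤ) (m : ℕ) (i : Fin n) :
    ((M.mulVec h i : ℤ) : ZMod m) =
      (M.map (Int.cast : ℤ → ZMod m)).mulVec (fun j => ((h j : ZMod m))) i := by
  simp only [Matrix.mulVec, dotProduct, Matrix.map_apply]
  push_cast
  rfl

/-- For `A ∈ R_p`, the endomorphism `ψ A` of `H_p` is an automorphism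
iff `p ∤ det A` (equivalently `A mod p ∈ GL_n(F_p)`). -/
theorem stmt_12 (p n : ℕ) (hp : p.Prime) (e : Fin n → ℕ)
    (he1 : ∀ i, 1 ≤ e i) (he : Monotone e)
    (ψ : Rp p n e he →+* AddMonoid.End (∀ i : Fin n, ZMod (p ^ e i)))
    (hψ : ∀ A : Rp p n e he, ∀ h : Fin n → ℤ,
      ψ A (fun i => ((h i : ZMod (p ^ e i)))) =
        fun i => (((A : Matrix (Fin n) (Fin n) ℤ).mulVec h i : ℤ) : ZMod (p ^ e i)))
    (A : Rp p n e he) :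
    Function.Bijective (ψ A) ↔ ¬ (p : ℤ) ∣ (A : Matrix (Fin n) (Fin n) ℤ).det := by
  haveI : Fact p.Prime := ⟨hp⟩
  haveI : ∀ i : Fin n, NeZero (p ^ e i) := fun i => ⟨pow_ne_zero _ hp.pos.ne'⟩
  set M : Matrix (Fin n) (Fin n) ℤ := (A : Matrix (Fin n) (Fin n) ℤ) with hM
  constructor
  · intro hbij hdvd
    have hpdvd : ∀ i : Fin n, p ∣ p ^ e i :=
      fun i => dvd_pow_self p (Nat.one_le_iff_ne_zero.mp (he1 i))
    have hsurj : Function.Surjective ((M.map (Int.cast : ℤ → ZMod p)).mulVec) := by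
      intro w
      choose g hg using fun i => ZMod.intCast_surjective (n := p) (w i)
      obtain ⟨z, hz⟩ := hbij.2 (fun i => ((g i : ZMod (p ^ e i))))
      choose h hh using fun i => ZMod.intCast_surjective (n := p ^ e i) (z i)
      have hz' : ψ A (fun i => ((h i : ZMod (p ^ e i)))) = fun i => ((g i : ZMod (p ^ e i))) := by
        rw [show (fun i => ((h i : ZMod (p ^ e i)))) = z from funext hh]; exact hz
      rw [hψ] at hz'
      refine ⟨fun j => (h j : ZMod p), funext fun i => ?_⟩
      have h2 := congrArg (ZMod.castHom (hpdvd i) (ZMod p)) (congrFun hz' i)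
      rw [map_intCast, map_intCast] at h2
      rw [← mulVec_cast, h2, hg]
    have hunit : IsUnit (M.map (Int.cast : ℤ → ZMod p)).det :=
      (Matrix.isUnit_iff_isUnit_det _).mp (Matrix.mulVec_surjective_iff_isUnit.mp hsurj)
    have hdet0 : (M.map (Int.cast : ℤ → ZMod p)).det = 0 := by
      have hm : M.map (Int.cast : ℤ → ZMod p) = (Int.castRingHom (ZMod p)).mapMatrix M := by
        simp [RingHom.mapMatrix_apply]
      rw [hm, ← RingHom.map_det]
      simpa [ZMod.intCast_zmod_eq_zero_iff_dvd] using hdvd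
    rw [hdet0] at hunit
    exact hunit.ne_zero rfl
  · intro hndvd
    rw [← Finite.surjective_iff_bijective]
    intro y
    choose g hg using fun i => ZMod.intCast_surjective (n := p ^ e i) (y i)
    have hprime : Prime ((p : ℤ)) := Nat.prime_iff_prime_int.mp hp
    set E := Finset.univ.sup e with hE
    have hcop : IsCoprime ((p : ℤ) ^ E) M.det :=
      IsCoprime.pow_left (hprime.irreducible.coprime_iff_not_dvd.mpr hndvd)
    obtain ⟨u, v, huv⟩ := hcop
    set w : Fin n → ℤ := v • (M.adjugate.mulVec g) with hw
    refine ⟨fun i => ((w i : ZMod (p ^ e i))), ?_⟩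
    rw [hψ]
    funext i
    have hmv : M.mulVec w = v • (M.det • g) := by
      rw [hw, Matrix.mulVec_smul, Matrix.mulVec_mulVec, Matrix.mul_adjugate,
        Matrix.smul_mulVec, Matrix.one_mulVec]
    rw [hmv, ← hg i, ← sub_eq_zero, ← Int.cast_sub, ZMod.intCast_zmod_eq_zero_iff_dvd]
    obtain ⟨c, hc⟩ : ((p : ℤ) ^ (e i)) ∣ (p : ℤ) ^ E :=
      pow_dvd_pow _ (Finset.le_sup (Finset.mem_univ i))
    refine ⟨-(u * c * g i), ?_⟩
    push_cast
    have h1 : (v • M.det • g) i - g i = (v * M.det - 1) * g i := by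
      simp [Pi.smul_apply, smul_eq_mul]; ring
    rw [h1, show v * M.det - 1 = -(u * (p : ℤ) ^ E) by linarith [huv], hc]
    ring
end

section
/- If A ∈ R_p satisfies p ∤ det(A), then ψ(A) is invertible in End(H_p), with inverse ψ(s·adj(A)) where s is an integer inverse of det(A) modulo p^{e_n}. -/
/-!
Every element of `∏ ℤ/p^{e_i}` lifts to an integer vector, so an additive endomorphism
represented by an integer matrix is determined by that matrix, and composing endomorphisms
corresponds to multiplying matrices. Since `A · (s adj A) = (s adj A) · A = (s det A) · 1`
and `s det A ≡ 1` modulo `p^{e_n}`, hence modulo every `p^{e_i}`, both composites act as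
the identity.
-/

open Matrix

namespace ZModPi

variable {ι : Type*} {m : ι → ℕ}

theorem exists_intCast_eq (x : ∀ i, ZMod (m i)) :
    ∃ h : ι → ℤ, (fun i => (h i : ZMod (m i))) = x :=
  ⟨fun i => (x i).valMinAbs, funext fun i => ZMod.coe_valMinAbs (x i)⟩

variable [Fintype ι]

/-- `Represents A f` says `f = ψ(A)`. -/
def Represents (A : Matrix ι ι ℤ) (f : AddMonoid.End (∀ i, ZMod (m i))) : Prop :=
  ∀ h : ι → ℤ, f (fun i => (h i : ZMod (m i))) = fun i => ((A *ᵥ h) i : ZMod (m i))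

theorem Represents.mul {A B : Matrix ι ι ℤ} {f g : AddMonoid.End (∀ i, ZMod (m i))}
    (hf : Represents A f) (hg : Represents B g) : Represents (A * B) (f * g) := by
  intro h
  rw [← mulVec_mulVec, ← hf]
  exact congrArg f (hg h)

theorem Represents.eq_one_of_smul_one [DecidableEq ι] {c : ℤ}
    {F : AddMonoid.End (∀ i, ZMod (m i))} (hF : Represents (c • 1) F)
    (hc : ∀ i, (m i : ℤ) ∣ c - 1) : F = 1 := by
  ext1 x
  obtain ⟨h, rfl⟩ := exists_intCast_eq x
  rw [hF h]
  funext i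
  have hc1 : (c : ZMod (m i)) = 1 := by
    simpa using (ZMod.intCast_eq_intCast_iff_dvd_sub 1 c (m i)).mpr (hc i) |>.symm
  simp [hc1]

theorem Represents.mul_eq_one [DecidableEq ι] {A B : Matrix ι ι ℤ} {c : ℤ}
    {f g : AddMonoid.End (∀ i, ZMod (m i))} (hf : Represents A f) (hg : Represents B g)
    (hAB : A * B = c • 1) (hc : ∀ i, (m i : ℤ) ∣ c - 1) : f * g = 1 :=
  (hAB ▸ hf.mul hg).eq_one_of_smul_one hc

end ZModPi

open ZModPi in
theorem stmt_13_general (p n : ℕ) (e : Fin (n + 1) → ℕ)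
    (he : Monotone e)
    (A : Matrix (Fin (n + 1)) (Fin (n + 1)) ℤ)
    (s : ℤ) (hs : ((p : ℤ) ^ e (Fin.last n)) ∣ (s * A.det - 1))
    (f g : AddMonoid.End (∀ i : Fin (n + 1), ZMod (p ^ e i)))
    (hf : ∀ h : Fin (n + 1) → ℤ,
      f (fun i => ((h i : ZMod (p ^ e i)))) = fun i => ((A.mulVec h i : ℤ) : ZMod (p ^ e i)))
    (hg : ∀ h : Fin (n + 1) → ℤ,
      g (fun i => ((h i : ZMod (p ^ e i)))) =
        fun i => (((s • A.adjugate).mulVec h i : ℤ) : ZMod (p ^ e i))) :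
    IsUnit f ∧ f * g = 1 ∧ g * f = 1 := by
  have hmod : ∀ i, ((p ^ e i : ℕ) : ℤ) ∣ s * A.det - 1 := fun i => by
    push_cast
    exact (pow_dvd_pow _ (he (Fin.le_last i))).trans hs
  have hfg : f * g = 1 :=
    Represents.mul_eq_one hf hg (by rw [Matrix.mul_smul, mul_adjugate, smul_smul]) hmod
  have hgf : g * f = 1 :=
    Represents.mul_eq_one hg hf (by rw [Matrix.smul_mul, adjugate_mul, smul_smul]) hmod
  exact ⟨⟨⟨f, g, hfg, hgf⟩, rfl⟩, hfg, hgf⟩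

/-- If `A ∈ R_p` satisfies `p ∤ det A`, then the induced endomorphism
`ψ A` of `H_p` is invertible in `End(H_p)`, with inverse `ψ (s • adj A)`, where `s` is
an integer inverse of `det A` modulo `p ^ e_n` (here `e_n` is the largest exponent). -/
theorem stmt_13 (p n : ℕ) (hp : p.Prime) (e : Fin (n + 1) → ℕ)
    (he1 : ∀ i, 1 ≤ e i) (he : Monotone e)
    (A : Matrix (Fin (n + 1)) (Fin (n + 1)) ℤ)
    (hA : ∀ i j, j ≤ i → ((p : ℤ) ^ (e i - e j)) ∣ A i j)
    (hdet : ¬ (p : ℤ) ∣ A.det)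
    (s : ℤ) (hs : ((p : ℤ) ^ e (Fin.last n)) ∣ (s * A.det - 1))
    (f g : AddMonoid.End (∀ i : Fin (n + 1), ZMod (p ^ e i)))
    (hf : ∀ h : Fin (n + 1) → ℤ,
      f (fun i => ((h i : ZMod (p ^ e i)))) = fun i => ((A.mulVec h i : ℤ) : ZMod (p ^ e i)))
    (hg : ∀ h : Fin (n + 1) → ℤ,
      g (fun i => ((h i : ZMod (p ^ e i)))) =
        fun i => (((s • A.adjugate).mulVec h i : ℤ) : ZMod (p ^ e i))) :
    IsUnit f ∧ f * g = 1 ∧ g * f = 1 :=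
  stmt_13_general p n e he A s hs f g hf hg
end

section
/- If A, C ∈ R_p and ψ(A)∘ψ(C) = id on H_p, then AC ≡ I (mod p), and consequently p ∤ det(A). -/
/-- If `A, C ∈ R_p` and `ψ A ∘ ψ C = id` on `H_p`, then `A * C ≡ I`
(mod `p`, entrywise), and consequently `p ∤ det A`. -/
theorem stmt_14 (p n : ℕ) (hp : p.Prime) (e : Fin n → ℕ)
    (he1 : ∀ i, 1 ≤ e i) (he : Monotone e)
    (A C : Matrix (Fin n) (Fin n) ℤ)
    (hA : ∀ i j, j ≤ i → ((p : ℤ) ^ (e i - e j)) ∣ A i j)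
    (hC : ∀ i j, j ≤ i → ((p : ℤ) ^ (e i - e j)) ∣ C i j)
    (f g : AddMonoid.End (∀ i : Fin n, ZMod (p ^ e i)))
    (hf : ∀ h : Fin n → ℤ,
      f (fun i => ((h i : ZMod (p ^ e i)))) = fun i => ((A.mulVec h i : ℤ) : ZMod (p ^ e i)))
    (hg : ∀ h : Fin n → ℤ,
      g (fun i => ((h i : ZMod (p ^ e i)))) = fun i => ((C.mulVec h i : ℤ) : ZMod (p ^ e i)))
    (hfg : f * g = 1) :
    (∀ i j, (p : ℤ) ∣ (A * C - 1) i j) ∧ ¬ (p : ℤ) ∣ A.det := by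
  have key : ∀ i j, (p : ℤ) ∣ (A * C - 1) i j := by
    intro i j
    set v : Fin n → ℤ := Pi.single j 1 with hv
    have h1 : f (g (fun k => ((v k : ZMod (p ^ e k))))) = fun k => ((v k : ZMod (p ^ e k))) := by
      have := congrArg (fun φ : AddMonoid.End (∀ i : Fin n, ZMod (p ^ e i)) =>
        φ (fun k => ((v k : ZMod (p ^ e k))))) hfg
      simpa using this
    rw [hg v, hf (C.mulVec v)] at h1
    have h2 := congrFun h1 i
    have h3 : A.mulVec (C.mulVec v) i = (A * C) i j := by
      rw [Matrix.mulVec_mulVec, hv]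
      simp [Matrix.mulVec_single]
    rw [h3] at h2
    have h4 : v i = (1 : Matrix (Fin n) (Fin n) ℤ) i j := by
      simp [hv, Pi.single_apply, Matrix.one_apply, eq_comm]
    have h5 : ((p : ℤ) ^ (e i)) ∣ ((A * C) i j - (1 : Matrix (Fin n) (Fin n) ℤ) i j) := by
      have : (((A * C) i j - (1 : Matrix (Fin n) (Fin n) ℤ) i j : ℤ) : ZMod (p ^ e i)) = 0 := by
        push_cast
        rw [h2, h4]
        ring
      have := (ZMod.intCast_zmod_eq_zero_iff_dvd _ _).mp this
      exact_mod_cast this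
    have hdvd : (p : ℤ) ∣ (p : ℤ) ^ (e i) := dvd_pow_self _ (Nat.one_le_iff_ne_zero.mp (he1 i))
    simpa [Matrix.sub_apply] using hdvd.trans h5
  refine ⟨key, ?_⟩
  intro hdet
  have hne : ((p : ℤ) : ℤ) ≠ 0 := by exact_mod_cast hp.ne_zero
  haveI : Fact p.Prime := ⟨hp⟩
  -- reduce mod p
  have hmap : (A * C).map (Int.cast : ℤ → ZMod p) = 1 := by
    ext i j
    have := key i j
    have h0 : (((A * C - 1) i j : ℤ) : ZMod p) = 0 :=
      (ZMod.intCast_zmod_eq_zero_iff_dvd _ _).mpr (by exact_mod_cast this)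
    simp only [Matrix.sub_apply, Int.cast_sub, sub_eq_zero] at h0
    simpa [Matrix.map_apply, Matrix.one_apply, apply_ite (Int.cast : ℤ → ZMod p)] using h0
  have hdetcast : ((A.det : ZMod p)) * (C.det : ZMod p) = 1 := by
    have h6 := congrArg Matrix.det hmap
    have h7 : ((A * C).map (Int.cast : ℤ → ZMod p)).det = (((A * C).det : ℤ) : ZMod p) := by
      rw [show ((A * C).map (Int.cast : ℤ → ZMod p))
          = (Int.castRingHom (ZMod p)).mapMatrix (A * C) from rfl, ← RingHom.map_det]
      rfl
    rw [h7] at h6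
    simpa [Matrix.det_mul] using h6
  have : (A.det : ZMod p) = 0 := (ZMod.intCast_zmod_eq_zero_iff_dvd _ _).mpr (by exact_mod_cast hdet)
  rw [this, zero_mul] at hdetcast
  exact zero_ne_one hdetcast
end

section
/- Let p be prime, 1 ≤ e_1 ≤ ⋯ ≤ e_n, and set d_k = max{l : e_l = e_k} and c_k = min{l : e_l = e_k}. Then the number of automorphisms of H_p = ∏_{i=1}^n ℤ/p^{e_i}ℤ equals ∏_{k=1}^n (p^{d_k} − p^{k−1}) · ∏_{j=1}^n (p^{e_j})^{n−d_j} · ∏_{i=1}^n (p^{e_i−1})^{n−c_i+1}. -/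
lemma card_val_dvd {N b : ℕ} (hN : N ≠ 0) (hb : b ∣ N) :
    Nat.card {x : ZMod N // b ∣ x.val} = N / b := by
  haveI : NeZero N := ⟨hN⟩
  have hb0 : b ≠ 0 := fun h => hN (by simpa [h] using hb)
  have hNb : N / b ≠ 0 := fun h => hN (by rw [← Nat.div_mul_cancel hb, h, zero_mul])
  haveI : NeZero (N / b) := ⟨hNb⟩
  have key : ∀ y : ZMod (N / b), b * y.val < N := fun y => by
    calc b * y.val < b * (N / b) :=
          (Nat.mul_lt_mul_left (Nat.pos_of_ne_zero hb0)).2 (ZMod.val_lt y)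
    _ = N := Nat.mul_div_cancel' hb
  have E : {x : ZMod N // b ∣ x.val} ≃ ZMod (N / b) := by
    refine ⟨fun x => ((x.1.val / b : ℕ) : ZMod (N / b)),
      fun y => ⟨((b * y.val : ℕ) : ZMod N), by
        rw [ZMod.val_cast_of_lt (key y)]; exact Dvd.intro _ rfl⟩, ?_, ?_⟩
    · rintro ⟨x, hx⟩
      have h1 : x.val / b < N / b := Nat.div_lt_div_of_lt_of_dvd hb (ZMod.val_lt x)
      apply Subtype.ext
      simp only [ZMod.val_cast_of_lt h1]
      rw [Nat.mul_div_cancel' hx, ZMod.natCast_zmod_val]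
    · intro y
      simp only [ZMod.val_cast_of_lt (key y)]
      rw [Nat.mul_div_cancel_left _ (Nat.pos_of_ne_zero hb0), ZMod.natCast_zmod_val]
  rw [Nat.card_congr E, Nat.card_zmod]

lemma mul_eq_zero_iff_val_dvd {N a : ℕ} (hN : N ≠ 0) (ha : a ∣ N) (x : ZMod N) :
    (a : ZMod N) * x = 0 ↔ (N / a) ∣ x.val := by
  haveI : NeZero N := ⟨hN⟩
  have ha0 : 0 < a := Nat.pos_of_ne_zero (fun h => hN (by simpa [h] using ha))
  conv_lhs => rw [← ZMod.natCast_zmod_val x]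
  rw [← Nat.cast_mul, ZMod.natCast_eq_zero_iff]
  rw [show N ∣ a * x.val ↔ a * (N / a) ∣ a * x.val by rw [Nat.mul_div_cancel' ha]]
  exact Nat.mul_dvd_mul_iff_left ha0

lemma castval_eq_zero_iff_val_dvd {N a : ℕ} [NeZero a] (x : ZMod N) :
    ((x.val : ℕ) : ZMod a) = 0 ↔ a ∣ x.val :=
  ZMod.natCast_eq_zero_iff _ _

noncomputable section

variable {A B : Type*} [AddCommGroup A] [AddCommGroup B]

/-- Decompose a group as (range × ker) of a hom, with first component given by the hom. -/
def homDecomp (φ : A →+ B) : A ≃ (φ.range × φ.ker) := by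
  have sec : ∀ r : φ.range, ∃ a : A, φ a = (r : B) := fun r => r.2
  choose s hs using sec
  refine ⟨fun a => (⟨φ a, ⟨a, rfl⟩⟩, ⟨a - s ⟨φ a, ⟨a, rfl⟩⟩, ?_⟩),
    fun rk => s rk.1 + rk.2.1, ?_, ?_⟩
  · simp [AddMonoidHom.mem_ker, map_sub, hs]
  · intro a; simp [hs]
  · rintro ⟨⟨r, hr⟩, ⟨k, hk⟩⟩
    have hk' : φ k = 0 := hk
    have : φ (s ⟨r, hr⟩ + k) = r := by rw [map_add, hs, hk', add_zero]
    ext <;> simp [this, hk']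

@[simp] lemma homDecomp_fst (φ : A →+ B) (a : A) : ((homDecomp φ a).1 : B) = φ a := rfl

lemma card_eq_homDecomp (φ : A →+ B) :
    Nat.card A = Nat.card φ.range * Nat.card φ.ker := by
  rw [Nat.card_congr (homDecomp φ), Nat.card_prod]

open Function

noncomputable section

variable (p : ℕ) {n : ℕ} (e : Fin n → ℕ)

abbrev Hgrp := ∀ i : Fin n, ZMod (p ^ e i)

/-- the j-th standard generator -/
def delta (j : Fin n) : Hgrp p e := Pi.single j 1

/-- subgroup of elements of `ZMod (p^(e i))` killed by `p^(e j)` -/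
def T (i j : Fin n) : AddSubgroup (ZMod (p ^ e i)) :=
  (AddMonoidHom.mulLeft ((p ^ e j : ℕ) : ZMod (p ^ e i))).ker

lemma mem_T {i j : Fin n} (x : ZMod (p ^ e i)) :
    x ∈ T p e i j ↔ ((p ^ e j : ℕ) : ZMod (p ^ e i)) * x = 0 := Iff.rfl

variable [NeZero p]

lemma single_eq_val_smul {j : Fin n} (a : ZMod (p ^ e j)) :
    Pi.single j a = a.val • delta p e j := by
  rw [delta, ← Pi.single_smul]
  congr 1
  rw [nsmul_eq_mul, mul_one, ZMod.natCast_zmod_val]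

lemma hom_decompose (f : Hgrp p e →+ Hgrp p e) (x : Hgrp p e) :
    f x = ∑ j, (x j).val • f (delta p e j) := by
  conv_lhs => rw [← Finset.univ_sum_single x]
  rw [map_sum]
  refine Finset.sum_congr rfl fun j _ => ?_
  rw [single_eq_val_smul, map_nsmul]

@[simp] lemma delta_apply_same (j : Fin n) : delta p e j j = 1 := Pi.single_eq_same j 1

lemma delta_apply_ne {j k : Fin n} (h : k ≠ j) : delta p e j k = 0 := Pi.single_eq_of_ne h 1

lemma smul_delta_eq_zero (j : Fin n) : (p ^ e j) • delta p e j = 0 := by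
  funext k
  rw [Pi.smul_apply, Pi.zero_apply]
  rcases eq_or_ne k j with rfl | h
  · rw [delta_apply_same, nsmul_eq_mul, mul_one, ZMod.natCast_self]
  · rw [delta_apply_ne p e h, smul_zero]

/-- Φ : endomorphisms to tuples -/
def Phi (f : Hgrp p e →+ Hgrp p e) : ∀ j i, T p e i j := fun j i =>
  ⟨f (delta p e j) i, by
    rw [mem_T, ← nsmul_eq_mul, ← Pi.smul_apply, ← map_nsmul,
      smul_delta_eq_zero, map_zero, Pi.zero_apply]⟩

/-- additive hom `ZMod (p^(e j)) →+ ZMod (p^(e i))` sending 1 to `t` -/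
def liftg (j i : Fin n) (t : T p e i j) : ZMod (p ^ e j) →+ ZMod (p ^ e i) :=
  ZMod.lift _ ⟨zmultiplesHom _ (t : ZMod (p ^ e i)), by
    have ht := (mem_T p e (t : ZMod (p ^ e i))).mp t.2
    rw [zmultiplesHom_apply, natCast_zsmul, nsmul_eq_mul, ht]⟩

lemma liftg_natCast (j i : Fin n) (t : T p e i j) (m : ℕ) :
    liftg p e j i t ((m : ℕ) : ZMod (p ^ e j)) = m • (t : ZMod (p ^ e i)) := by
  have : ((m : ℕ) : ZMod (p ^ e j)) = ((m : ℤ) : ZMod (p ^ e j)) := by push_cast; rfl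
  rw [this, liftg, ZMod.lift_coe, zmultiplesHom_apply, natCast_zsmul]

/-- Ψ : tuples to endomorphisms -/
def Psi (t : ∀ j i, T p e i j) : Hgrp p e →+ Hgrp p e where
  toFun x i := ∑ j, liftg p e j i (t j i) (x j)
  map_zero' := by funext i; simp
  map_add' x y := by funext i; simp [Finset.sum_add_distrib]

lemma Psi_apply (t : ∀ j i, T p e i j) (x : Hgrp p e) (i : Fin n) :
    Psi p e t x i = ∑ j, liftg p e j i (t j i) (x j) := rfl

def PhiEquiv : (Hgrp p e →+ Hgrp p e) ≃ (∀ j i, T p e i j) where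
  toFun := Phi p e
  invFun := Psi p e
  left_inv f := by
    apply AddMonoidHom.ext
    intro x
    funext i
    rw [Psi_apply, hom_decompose p e f x]
    rw [Finset.sum_apply]
    refine Finset.sum_congr rfl fun j _ => ?_
    conv_lhs => rw [← ZMod.natCast_zmod_val (x j), liftg_natCast]
    rw [Pi.smul_apply]
    rfl
  right_inv t := by
    funext j i
    apply Subtype.ext
    show Psi p e t (delta p e j) i = _
    rw [Psi_apply]
    rw [Finset.sum_eq_single j]
    · rw [delta_apply_same,
        show (1 : ZMod (p ^ e j)) = ((1 : ℕ) : ZMod (p ^ e j)) by rw [Nat.cast_one],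
        liftg_natCast, one_nsmul]
    · intro k _ hk
      rw [delta_apply_ne p e hk, map_zero]
    · intro h; exact absurd (Finset.mem_univ j) h

variable (he1 : ∀ i, 1 ≤ e i)

/-- the reduction mod p on one coordinate -/
def red (i : Fin n) : ZMod (p ^ e i) →+ ZMod p :=
  (ZMod.castHom (dvd_pow_self p (Nat.one_le_iff_ne_zero.mp (he1 i))) (ZMod p)).toAddMonoidHom

lemma red_apply (i : Fin n) (x : ZMod (p ^ e i)) : red p e he1 i x = (x.val : ZMod p) := by
  simp [red, ZMod.natCast_val]

/-- reduction hom on `T` -/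
def phi (i j : Fin n) : T p e i j →+ ZMod p :=
  (red p e he1 i).comp (T p e i j).subtype

lemma phi_apply (i j : Fin n) (t : T p e i j) :
    phi p e he1 i j t = ((t : ZMod (p ^ e i)).val : ZMod p) := red_apply p e he1 i _

/-- matrix of reductions -/
def MatT (t : ∀ j i, T p e i j) : Matrix (Fin n) (Fin n) (ZMod p) :=
  Matrix.of fun i j => phi p e he1 i j (t j i)

/-- the reduction of an element of `H` -/
def pim (x : Hgrp p e) : Fin n → ZMod p := fun i => red p e he1 i (x i)

lemma pim_surjective : Surjective (pim p e he1) := by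
  intro y
  refine ⟨fun i => (((y i).val : ℕ) : ZMod (p ^ e i)), ?_⟩
  funext i
  have hlt : (y i).val < p ^ e i :=
    lt_of_lt_of_le (ZMod.val_lt (y i)) (Nat.le_self_pow (Nat.one_le_iff_ne_zero.mp (he1 i)) p)
  rw [pim, red_apply, ZMod.val_cast_of_lt hlt, ZMod.natCast_zmod_val]

lemma red_smul (i : Fin n) (m : ℕ) (x : ZMod (p ^ e i)) :
    red p e he1 i (m • x) = (m : ZMod p) * red p e he1 i x := by
  rw [map_nsmul, nsmul_eq_mul]

/-- the key commuting square -/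
lemma square (t : ∀ j i, T p e i j) (x : Hgrp p e) :
    pim p e he1 (Psi p e t x) = (MatT p e he1 t).mulVec (pim p e he1 x) := by
  funext i
  rw [pim, Psi_apply, map_sum, Matrix.mulVec]
  show _ = ∑ j, MatT p e he1 t i j * pim p e he1 x j
  refine Finset.sum_congr rfl fun j _ => ?_
  conv_lhs => rw [← ZMod.natCast_zmod_val (x j), liftg_natCast, red_smul]
  rw [MatT, Matrix.of_apply, pim, red_apply, phi_apply, mul_comm]
  congr 1
  rw [red_apply]

lemma square' (f : Hgrp p e →+ Hgrp p e) (x : Hgrp p e) :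
    pim p e he1 (f x) = (MatT p e he1 (Phi p e f)).mulVec (pim p e he1 x) := by
  conv_lhs => rw [← (PhiEquiv p e).left_inv f]
  exact square p e he1 (Phi p e f) x

lemma nakayama (f : Hgrp p e →+ Hgrp p e)
    (hsur : Surjective ((MatT p e he1 (Phi p e f)).mulVec)) : Surjective f := by
  set E := Finset.univ.sup e with hE
  have claim : ∀ k, ∀ y : Hgrp p e, ∃ x z, y = f x + (p ^ k) • z := by
    intro k
    induction k with
    | zero => exact fun y => ⟨0, y, by simp⟩
    | succ k ih =>
      intro y
      obtain ⟨x, z, hxz⟩ := ih y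
      obtain ⟨v, hv⟩ := hsur (pim p e he1 z)
      obtain ⟨x', hx'⟩ := pim_surjective p e he1 v
      have hpz : ∀ i, (p : ℕ) ∣ ((z - f x') i).val := by
        intro i
        have : pim p e he1 (f x') = pim p e he1 z := by rw [square' p e he1, hx', hv]
        have h0 : red p e he1 i ((z - f x') i) = 0 := by
          have := congrFun this i
          rw [pim, pim] at this
          rw [Pi.sub_apply, map_sub, this, sub_self]
        rw [red_apply] at h0
        exact (ZMod.natCast_eq_zero_iff _ _).mp h0
      set w : Hgrp p e := fun i => ((((z - f x') i).val / p : ℕ) : ZMod (p ^ e i)) with hw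
      have hzw : z - f x' = p • w := by
        funext i
        rw [Pi.smul_apply, hw, nsmul_eq_mul, ← Nat.cast_mul,
          Nat.mul_div_cancel' (hpz i), ZMod.natCast_zmod_val]
      refine ⟨x + (p ^ k) • x', w, ?_⟩
      have hz : z = f x' + p • w := by rw [← hzw]; abel
      rw [hxz, hz, map_add, map_nsmul, smul_add, smul_smul, ← pow_succ]
      abel
  intro y
  obtain ⟨x, z, hxz⟩ := claim E y
  refine ⟨x, ?_⟩
  have hz0 : (p ^ E) • z = 0 := by
    funext i
    rw [Pi.smul_apply, nsmul_eq_mul, Pi.zero_apply]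
    have : ((p ^ E : ℕ) : ZMod (p ^ e i)) = 0 := by
      rw [ZMod.natCast_eq_zero_iff]
      exact pow_dvd_pow p (Finset.le_sup (Finset.mem_univ i))
    rw [this, zero_mul]
  rw [hxz, hz0, add_zero]

lemma bijective_iff_isUnit (f : Hgrp p e →+ Hgrp p e) :
    Bijective f ↔ IsUnit (MatT p e he1 (Phi p e f)) := by
  haveI : ∀ i : Fin n, NeZero (p ^ e i) := fun i => ⟨pow_ne_zero _ (NeZero.ne p)⟩
  rw [← Matrix.mulVec_surjective_iff_isUnit]
  constructor
  · intro hb v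
    obtain ⟨y, hy⟩ := pim_surjective p e he1 v
    obtain ⟨x, hx⟩ := hb.surjective y
    exact ⟨pim p e he1 x, by rw [← square' p e he1, hx, hy]⟩
  · intro hs
    have hsur := nakayama p e he1 f hs
    exact ⟨Finite.injective_iff_surjective.mpr hsur, hsur⟩

lemma phi_surjective {i j : Fin n} (h : e i ≤ e j) : Surjective (phi p e he1 i j) := by
  intro y
  haveI : NeZero (p ^ e i) := ⟨pow_ne_zero _ (NeZero.ne p)⟩
  have hmem : (((y.val : ℕ) : ZMod (p ^ e i)) ∈ T p e i j) := by
    rw [mem_T, show ((p ^ e j : ℕ) : ZMod (p ^ e i)) = 0 by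
      rw [ZMod.natCast_eq_zero_iff]; exact pow_dvd_pow p h, zero_mul]
  refine ⟨⟨_, hmem⟩, ?_⟩
  have hlt : y.val < p ^ e i :=
    lt_of_lt_of_le (ZMod.val_lt y) (Nat.le_self_pow (Nat.one_le_iff_ne_zero.mp (he1 i)) p)
  rw [phi_apply]
  show ((((y.val : ℕ) : ZMod (p ^ e i)).val : ℕ) : ZMod p) = y
  rw [ZMod.val_cast_of_lt hlt, ZMod.natCast_zmod_val]

lemma phi_eq_zero {i j : Fin n} (h : e j < e i) (t : T p e i j) : phi p e he1 i j t = 0 := by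
  have hNz : (p : ℕ) ^ e i ≠ 0 := pow_ne_zero _ (NeZero.ne p)
  have hdvd : (p : ℕ) ^ e j ∣ p ^ e i := pow_dvd_pow p h.le
  have ht := (mem_T p e (t : ZMod (p ^ e i))).mp t.2
  rw [mul_eq_zero_iff_val_dvd hNz hdvd, Nat.pow_div h.le (Nat.pos_of_ne_zero (NeZero.ne p))] at ht
  have hp1 : (p : ℕ) ∣ (t : ZMod (p ^ e i)).val :=
    dvd_trans (dvd_pow_self p (Nat.sub_ne_zero_of_lt h)) ht
  rw [phi_apply, ZMod.natCast_eq_zero_iff]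
  exact hp1

lemma card_ker_phi (i j : Fin n) :
    Nat.card (phi p e he1 i j).ker = if e j < e i then p ^ e j else p ^ (e i - 1) := by
  have hNz : (p : ℕ) ^ e i ≠ 0 := pow_ne_zero _ (NeZero.ne p)
  haveI : NeZero (p ^ e i) := ⟨hNz⟩
  have hppos : 0 < p := Nat.pos_of_ne_zero (NeZero.ne p)
  split_ifs with h
  · -- e j < e i : kernel is all of T
    have hdvd : (p : ℕ) ^ e j ∣ p ^ e i := pow_dvd_pow p h.le
    have E : (phi p e he1 i j).ker ≃ {x : ZMod (p ^ e i) // (p ^ e i / p ^ e j) ∣ x.val} := by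
      refine ⟨fun t => ⟨(t.1 : ZMod (p ^ e i)), ?_⟩, fun x => ⟨⟨x.1, ?_⟩, ?_⟩, ?_, ?_⟩
      · rw [← mul_eq_zero_iff_val_dvd hNz hdvd, ← mem_T]; exact t.1.2
      · rw [mem_T, mul_eq_zero_iff_val_dvd hNz hdvd]; exact x.2
      · exact phi_eq_zero p e he1 h _
      · intro t; apply Subtype.ext; apply Subtype.ext; rfl
      · intro x; rfl
    rw [Nat.card_congr E, card_val_dvd hNz (Nat.div_dvd_of_dvd hdvd),
      Nat.pow_div h.le hppos, Nat.pow_div (Nat.sub_le _ _) hppos,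
      Nat.sub_sub_self h.le]
  · -- e i ≤ e j : T is everything, kernel is multiples of p
    push_neg at h
    have hall : ∀ x : ZMod (p ^ e i), x ∈ T p e i j := by
      intro x
      rw [mem_T, show ((p ^ e j : ℕ) : ZMod (p ^ e i)) = 0 by
        rw [ZMod.natCast_eq_zero_iff]; exact pow_dvd_pow p h, zero_mul]
    have E : (phi p e he1 i j).ker ≃ {x : ZMod (p ^ e i) // (p : ℕ) ∣ x.val} := by
      refine ⟨fun t => ⟨(t.1 : ZMod (p ^ e i)), ?_⟩, fun x => ⟨⟨x.1, hall x.1⟩, ?_⟩, ?_, ?_⟩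
      · have := t.2
        rw [AddMonoidHom.mem_ker, phi_apply, ZMod.natCast_eq_zero_iff] at this
        exact this
      · rw [AddMonoidHom.mem_ker, phi_apply, ZMod.natCast_eq_zero_iff]; exact x.2
      · intro t; apply Subtype.ext; apply Subtype.ext; rfl
      · intro x; rfl
    rw [Nat.card_congr E, card_val_dvd hNz (dvd_pow_self p (Nat.one_le_iff_ne_zero.mp (he1 i)))]
    have hsplit : (p:ℕ) ^ e i = p ^ (e i - 1) * p := by
      rw [← pow_succ, Nat.sub_add_cancel (he1 i)]
    rw [hsplit, Nat.mul_div_cancel _ hppos]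

/-- tuples decompose as (ranges, kernels) -/
def EE : (∀ j i, T p e i j) ≃ ((∀ j i, (phi p e he1 i j).range) × (∀ j i, (phi p e he1 i j).ker)) where
  toFun t := (fun j i => (homDecomp (phi p e he1 i j) (t j i)).1,
              fun j i => (homDecomp (phi p e he1 i j) (t j i)).2)
  invFun rk := fun j i => (homDecomp (phi p e he1 i j)).symm (rk.1 j i, rk.2 j i)
  left_inv t := by funext j i; simp
  right_inv rk := by
    refine Prod.ext ?_ ?_ <;> funext j i <;>
      simp [Equiv.apply_symm_apply]

/-- matrices built from range tuples -/
def MatR (r : ∀ j i, (phi p e he1 i j).range) : Matrix (Fin n) (Fin n) (ZMod p) :=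
  Matrix.of fun i j => (r j i : ZMod p)

lemma MatT_eq_MatR (t : ∀ j i, T p e i j) :
    MatT p e he1 t = MatR p e he1 ((EE p e he1 t).1) := rfl

/-- range tuples are exactly block triangular matrices -/
def rangeMatEquiv : (∀ j i, (phi p e he1 i j).range) ≃
    {M : Matrix (Fin n) (Fin n) (ZMod p) // M.BlockTriangular e} where
  toFun r := ⟨MatR p e he1 r, by
    intro i j hij
    obtain ⟨t, ht⟩ := (r j i).2
    show ((r j i : ZMod p)) = 0
    rw [← ht, phi_eq_zero p e he1 hij]⟩
  invFun M := fun j i =>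
    ⟨M.1 i j, by
      rcases lt_or_ge (e j) (e i) with h | h
      · rw [M.2 h]; exact ⟨0, map_zero _⟩
      · exact phi_surjective p e he1 h (M.1 i j)⟩
  left_inv r := by funext j i; apply Subtype.ext; rfl
  right_inv M := by apply Subtype.ext; rfl

/-- automorphisms correspond to bijective endomorphisms -/
def autEquivBij : AddAut (Hgrp p e) ≃ {f : Hgrp p e →+ Hgrp p e // Bijective f} where
  toFun a := ⟨a.toAddMonoidHom, a.bijective⟩
  invFun s := AddEquiv.ofBijective s.1 s.2
  left_inv a := by ext x; rfl
  right_inv s := by apply Subtype.ext; ext x; rfl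

lemma card_aut_eq :
    Nat.card (AddAut (Hgrp p e)) =
      Nat.card {M : Matrix (Fin n) (Fin n) (ZMod p) // M.BlockTriangular e ∧ IsUnit M} *
        ∏ j, ∏ i, Nat.card (phi p e he1 i j).ker := by
  rw [Nat.card_congr (autEquivBij p e)]
  rw [Nat.card_congr (Equiv.subtypeEquiv (q := fun t => IsUnit (MatT p e he1 t)) (PhiEquiv p e)
    (fun f => bijective_iff_isUnit p e he1 f))]
  rw [Nat.card_congr (Equiv.subtypeEquiv
    (q := fun rk => IsUnit (MatR p e he1 rk.1)) (EE p e he1)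
    (fun t => by rw [MatT_eq_MatR]))]
  rw [Nat.card_congr (Equiv.prodSubtypeFstEquivSubtypeProd
    (p := fun r => IsUnit (MatR p e he1 r)))]
  rw [Nat.card_prod]
  congr 1
  · exact Nat.card_congr ((Equiv.subtypeEquiv
      (q := fun M : {M : Matrix (Fin n) (Fin n) (ZMod p) // M.BlockTriangular e} => IsUnit M.1)
      (rangeMatEquiv p e he1) (fun r => Iff.rfl)).trans
      (Equiv.subtypeSubtypeEquivSubtypeInter _ _))
  · rw [Nat.card_pi]
    refine Finset.prod_congr rfl fun j _ => ?_
    rw [Nat.card_pi]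

/-- decompose block triangular matrices into diagonal blocks and strict entries -/
def G2 : {M : Matrix (Fin n) (Fin n) (ZMod p) // M.BlockTriangular e} ≃
    ((∀ v : (Finset.image e Finset.univ),
        Matrix {i : Fin n // e i = v.1} {i : Fin n // e i = v.1} (ZMod p)) ×
      ({q : Fin n × Fin n // e q.1 < e q.2} → ZMod p)) where
  toFun M := (fun v => Matrix.of fun a b => M.1 a.1 b.1, fun q => M.1 q.1.1 q.1.2)
  invFun Ds := ⟨Matrix.of fun i j =>
      if h : e i = e j then
        Ds.1 ⟨e i, Finset.mem_image_of_mem e (Finset.mem_univ i)⟩ ⟨i, rfl⟩ ⟨j, h.symm⟩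
      else if h2 : e i < e j then Ds.2 ⟨(i, j), h2⟩ else 0, by
      intro i j hij
      show dite _ _ _ = 0
      rw [dif_neg (ne_of_gt hij), dif_neg (asymm hij)]⟩
  left_inv M := by
    apply Subtype.ext
    apply Matrix.ext
    intro i j
    show dite _ _ _ = M.1 i j
    rcases lt_trichotomy (e i) (e j) with h | h | h
    · rw [dif_neg (ne_of_lt h), dif_pos h]
    · rw [dif_pos h]; rfl
    · rw [dif_neg (ne_of_gt h), dif_neg (asymm h)]
      exact (M.2 h).symm
  right_inv Ds := by
    obtain ⟨D, s⟩ := Ds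
    refine Prod.ext ?_ ?_
    · funext v
      apply Matrix.ext
      intro a b
      obtain ⟨v, hv⟩ := v
      obtain ⟨a, ha⟩ := a
      obtain ⟨b, hb⟩ := b
      replace ha : e a = v := ha
      replace hb : e b = v := hb
      subst ha
      show dite _ _ _ = _
      rw [dif_pos hb.symm]
    · funext q
      obtain ⟨⟨a, b⟩, hq⟩ := q
      show dite _ _ _ = _
      rw [dif_neg (ne_of_lt hq), dif_pos hq]

/-- units of a monoid as a subtype -/
def subtypeUnitsEquiv (M : Type*) [Monoid M] : {x : M // IsUnit x} ≃ Mˣ where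
  toFun x := x.2.unit
  invFun u := ⟨u, u.isUnit⟩
  left_inv x := Subtype.ext x.2.unit_spec
  right_inv u := Units.ext rfl

lemma card_isUnit_matrix (hp : p.Prime) (ι : Type) [Fintype ι] [DecidableEq ι] :
    Nat.card {N : Matrix ι ι (ZMod p) // IsUnit N} =
      ∏ i : Fin (Fintype.card ι), ((p : ℕ) ^ (Fintype.card ι) - p ^ (i : ℕ)) := by
  haveI : Fact p.Prime := ⟨hp⟩
  set m := Fintype.card ι with hm
  have E : {N : Matrix ι ι (ZMod p) // IsUnit N} ≃ (Matrix (Fin m) (Fin m) (ZMod p))ˣ :=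
    (subtypeUnitsEquiv _).trans
      (Units.mapEquiv ((Matrix.reindexAlgEquiv (ZMod p) (ZMod p)
        (Fintype.equivFin ι)).toRingEquiv.toMulEquiv))
  rw [Nat.card_congr E]
  have := Matrix.card_GL_field (𝔽 := ZMod p) m
  rw [ZMod.card p] at this
  exact this

lemma isUnit_blk_iff (hp : p.Prime) (Ms : {M : Matrix (Fin n) (Fin n) (ZMod p) // M.BlockTriangular e}) :
    IsUnit Ms.1 ↔ ∀ v : (Finset.image e Finset.univ), IsUnit ((G2 p e Ms).1 v) := by
  haveI : Fact p.Prime := ⟨hp⟩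
  rw [Matrix.isUnit_iff_isUnit_det, isUnit_iff_ne_zero, Ms.2.det, Finset.prod_ne_zero_iff]
  constructor
  · intro h v
    rw [Matrix.isUnit_iff_isUnit_det, isUnit_iff_ne_zero]
    exact h v.1 v.2
  · intro h a ha
    have := h ⟨a, ha⟩
    rw [Matrix.isUnit_iff_isUnit_det, isUnit_iff_ne_zero] at this
    exact this

lemma card_blk_unit (hp : p.Prime) :
    Nat.card {M : Matrix (Fin n) (Fin n) (ZMod p) // M.BlockTriangular e ∧ IsUnit M} =
      (∏ v : (Finset.image e Finset.univ),
        ∏ i : Fin (Fintype.card {i : Fin n // e i = v.1}),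
          ((p : ℕ) ^ (Fintype.card {i : Fin n // e i = v.1}) - p ^ (i : ℕ))) *
        p ^ (Fintype.card {q : Fin n × Fin n // e q.1 < e q.2}) := by
  rw [Nat.card_congr (Equiv.subtypeSubtypeEquivSubtypeInter
    (fun M : Matrix (Fin n) (Fin n) (ZMod p) => M.BlockTriangular e) (fun M => IsUnit M)).symm]
  rw [Nat.card_congr (Equiv.subtypeEquiv
    (q := fun Ds => ∀ v : (Finset.image e Finset.univ), IsUnit (Ds.1 v)) (G2 p e)
    (fun Ms => isUnit_blk_iff p e hp Ms))]
  rw [Nat.card_congr (Equiv.prodSubtypeFstEquivSubtypeProd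
    (p := fun D : (∀ v : (Finset.image e Finset.univ), _) => ∀ v, IsUnit (D v)))]
  rw [Nat.card_prod, Nat.card_congr (Equiv.subtypePiEquivPi), Nat.card_pi]
  congr 1
  · exact Finset.prod_congr rfl fun v _ => card_isUnit_matrix p hp _
  · rw [Nat.card_pi, Finset.prod_const, Nat.card_zmod, Finset.card_univ]

section Final

variable {p : ℕ} {n : ℕ} {e : Fin n → ℕ} {d c : Fin n → Fin n}

lemma lt_c_iff (he : Monotone e)
    (hc : ∀ k, e (c k) = e k ∧ ∀ l, e l = e k → c k ≤ l) (k l : Fin n) :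
    e l < e k ↔ l < c k := by
  constructor
  · intro h
    by_contra hcon
    push_neg at hcon
    exact absurd ((hc k).1 ▸ he hcon) (not_le.mpr h)
  · intro h
    have h1 : e l ≤ e k := (hc k).1 ▸ he h.le
    rcases h1.lt_or_eq with h2 | h2
    · exact h2
    · exact absurd ((hc k).2 l h2) (not_le.mpr h)

lemma gt_d_iff (he : Monotone e)
    (hd : ∀ k, e (d k) = e k ∧ ∀ l, e l = e k → l ≤ d k) (k l : Fin n) :
    e k < e l ↔ d k < l := by
  constructor
  · intro h
    by_contra hcon
    push_neg at hcon
    exact absurd ((hd k).1 ▸ he hcon) (not_le.mpr h)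
  · intro h
    have h1 : e k ≤ e l := (hd k).1 ▸ he h.le
    rcases h1.lt_or_eq with h2 | h2
    · exact h2
    · exact absurd ((hd k).2 l h2.symm) (not_le.mpr h)

lemma eq_e_iff (he : Monotone e)
    (hd : ∀ k, e (d k) = e k ∧ ∀ l, e l = e k → l ≤ d k)
    (hc : ∀ k, e (c k) = e k ∧ ∀ l, e l = e k → c k ≤ l) (k l : Fin n) :
    e l = e k ↔ c k ≤ l ∧ l ≤ d k := by
  constructor
  · intro h
    exact ⟨(hc k).2 l h, (hd k).2 l h⟩
  · rintro ⟨h1, h2⟩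
    have := ((hc k).1 ▸ he h1 : e k ≤ e l)
    have := ((hd k).1 ▸ he h2 : e l ≤ e k)
    omega

lemma card_lt_subtype (a : Fin n) : Fintype.card {i : Fin n // i < a} = (a : ℕ) := by
  rw [Fintype.card_subtype]
  rw [show Finset.univ.filter (· < a) = Finset.Iio a by ext i; simp]
  exact Fin.card_Iio a

lemma card_gt_subtype (a : Fin n) : Fintype.card {i : Fin n // a < i} = n - ((a : ℕ) + 1) := by
  rw [Fintype.card_subtype]
  rw [show Finset.univ.filter (a < ·) = Finset.Ioi a by ext i; simp]
  rw [Fin.card_Ioi, Nat.sub_sub, Nat.add_comm]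

lemma card_ge_subtype (a : Fin n) : Fintype.card {i : Fin n // a ≤ i} = n - (a : ℕ) := by
  rw [Fintype.card_subtype]
  rw [show Finset.univ.filter (a ≤ ·) = Finset.Ici a by ext i; simp]
  exact Fin.card_Ici a

lemma EQ2 (he : Monotone e)
    (hc : ∀ k, e (c k) = e k ∧ ∀ l, e l = e k → c k ≤ l) :
    (p : ℕ) ^ (Fintype.card {q : Fin n × Fin n // e q.1 < e q.2}) =
      ∏ k : Fin n, (p : ℕ) ^ (c k : ℕ) := by
  have E : {q : Fin n × Fin n // e q.1 < e q.2} ≃ Σ k : Fin n, {i : Fin n // e i < e k} :=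
    ⟨fun q => ⟨q.1.2, q.1.1, q.2⟩, fun s => ⟨(s.2.1, s.1), s.2.2⟩,
      fun q => by rfl, fun s => by rfl⟩
  rw [Fintype.card_congr E, Fintype.card_sigma]
  rw [Finset.prod_pow_eq_pow_sum]
  congr 1
  refine Finset.sum_congr rfl fun k _ => ?_
  rw [Fintype.card_congr (Equiv.subtypeEquivRight (fun i => lt_c_iff he hc k i)),
    card_lt_subtype]

lemma EQ3 (he : Monotone e)
    (hd : ∀ k, e (d k) = e k ∧ ∀ l, e l = e k → l ≤ d k)
    (hc : ∀ k, e (c k) = e k ∧ ∀ l, e l = e k → c k ≤ l) :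
    (∏ j : Fin n, ∏ i : Fin n,
        (if e j < e i then (p : ℕ) ^ e j else p ^ (e i - 1))) =
      (∏ j : Fin n, ((p : ℕ) ^ e j) ^ (n - ((d j : ℕ) + 1))) *
        ∏ i : Fin n, ((p : ℕ) ^ (e i - 1)) ^ (n - (c i : ℕ)) := by
  have split : ∀ j i : Fin n,
      (if e j < e i then (p : ℕ) ^ e j else p ^ (e i - 1)) =
        (if e j < e i then (p : ℕ) ^ e j else 1) *
          (if e j < e i then 1 else (p : ℕ) ^ (e i - 1)) := by
    intro j i; split_ifs <;> simp
  simp_rw [split, Finset.prod_mul_distrib]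
  congr 1
  · refine Finset.prod_congr rfl fun j _ => ?_
    rw [Finset.prod_ite, Finset.prod_const, Finset.prod_const_one, mul_one]
    congr 1
    rw [show Finset.univ.filter (fun i => e j < e i) = Finset.univ.filter (fun i => d j < i) by
      ext i; simp [gt_d_iff he hd j i]]
    rw [← Fintype.card_subtype, card_gt_subtype]
  · rw [Finset.prod_comm]
    refine Finset.prod_congr rfl fun i _ => ?_
    rw [Finset.prod_ite, Finset.prod_const, Finset.prod_const, one_pow, one_mul]
    congr 1
    rw [show Finset.univ.filter (fun j => ¬ e j < e i) = Finset.univ.filter (fun j => c i ≤ j) by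
      ext j
      simp only [Finset.mem_filter, Finset.mem_univ, true_and]
      exact (not_congr (lt_c_iff he hc i j)).trans not_lt]
    rw [← Fintype.card_subtype, card_ge_subtype]

end Final

section Final2

variable {p : ℕ} {n : ℕ} {e : Fin n → ℕ} {d c : Fin n → Fin n}

lemma class_prod (he : Monotone e)
    (hd : ∀ k, e (d k) = e k ∧ ∀ l, e l = e k → l ≤ d k)
    (hc : ∀ k, e (c k) = e k ∧ ∀ l, e l = e k → c k ≤ l) (k0 : Fin n) :
    ∏ k ∈ Finset.univ.filter (fun l => e l = e k0),
        ((p : ℕ) ^ ((d k : ℕ) + 1) - p ^ (k : ℕ)) =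
      (∏ i : Fin (Fintype.card {i : Fin n // e i = e k0}),
        ((p : ℕ) ^ (Fintype.card {i : Fin n // e i = e k0}) - p ^ (i : ℕ))) *
      ∏ k ∈ Finset.univ.filter (fun l => e l = e k0), (p : ℕ) ^ (c k : ℕ) := by
  have hc0d0 : ∀ k, e k = e k0 → c k = c k0 ∧ d k = d k0 := by
    intro k hk
    constructor
    · exact le_antisymm ((hc k).2 _ (by rw [(hc k0).1, hk]))
        ((hc k0).2 _ (by rw [(hc k).1, hk]))
    · exact le_antisymm ((hd k0).2 _ (by rw [(hd k).1, hk]))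
        ((hd k).2 _ (by rw [(hd k0).1, hk]))
  have hfil : Finset.univ.filter (fun l => e l = e k0) = Finset.Icc (c k0) (d k0) := by
    ext l
    simp only [Finset.mem_filter, Finset.mem_univ, true_and, Finset.mem_Icc]
    exact eq_e_iff he hd hc k0 l
  have hcle : (c k0 : ℕ) ≤ (k0 : ℕ) := (hc k0).2 k0 rfl
  have hdge : (k0 : ℕ) ≤ (d k0 : ℕ) := (hd k0).2 k0 rfl
  have hm : Fintype.card {i : Fin n // e i = e k0} = (d k0 : ℕ) + 1 - (c k0 : ℕ) := by
    rw [Fintype.card_subtype, hfil, Fin.card_Icc]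
  set c0 := (c k0 : ℕ)
  set d0 := (d k0 : ℕ)
  set m := d0 + 1 - c0 with hmdef
  have hsum : c0 + m = d0 + 1 := by omega
  have h1 : ∏ k ∈ Finset.univ.filter (fun l => e l = e k0),
        ((p:ℕ) ^ ((d k : ℕ) + 1) - p ^ (k : ℕ)) =
      ∏ k ∈ Finset.univ.filter (fun l => e l = e k0), ((p:ℕ) ^ (d0 + 1) - p ^ (k : ℕ)) := by
    refine Finset.prod_congr rfl fun k hk => ?_
    have hek : e k = e k0 := (Finset.mem_filter.mp hk).2
    rw [(hc0d0 k hek).2]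
  have h2 : ∏ k ∈ Finset.univ.filter (fun l => e l = e k0), (p:ℕ) ^ (c k : ℕ) =
      ∏ k ∈ Finset.univ.filter (fun l => e l = e k0), (p:ℕ) ^ c0 := by
    refine Finset.prod_congr rfl fun k hk => ?_
    have hek : e k = e k0 := (Finset.mem_filter.mp hk).2
    rw [(hc0d0 k hek).1]
  rw [h1, h2, hfil, hm]
  have hmap : ∀ f : ℕ → ℕ,
      ∏ k ∈ Finset.Icc (c k0) (d k0), f (k : ℕ) = ∏ x ∈ Finset.Icc c0 d0, f x := by
    intro f
    rw [← Fin.map_valEmbedding_Icc, Finset.prod_map]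
    rfl
  rw [hmap (fun x => (p:ℕ) ^ (d0 + 1) - p ^ x), hmap (fun _ => (p:ℕ) ^ c0)]
  rw [← Finset.Ico_add_one_right_eq_Icc, Finset.prod_Ico_eq_prod_range, Finset.prod_const,
    Nat.card_Ico]
  have hfac : ∀ i, (p:ℕ) ^ (d0 + 1) - p ^ (c0 + i) = p ^ c0 * (p ^ m - p ^ i) := by
    intro i
    rw [Nat.mul_sub, ← pow_add, ← pow_add, hsum]
  simp_rw [hfac]
  rw [Finset.prod_mul_distrib, Finset.prod_const, Finset.card_range,
    Fin.prod_univ_eq_prod_range (fun i => (p:ℕ) ^ m - p ^ i) m]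
  ring

lemma EQ1 (he : Monotone e)
    (hd : ∀ k, e (d k) = e k ∧ ∀ l, e l = e k → l ≤ d k)
    (hc : ∀ k, e (c k) = e k ∧ ∀ l, e l = e k → c k ≤ l) :
    ∏ k : Fin n, ((p : ℕ) ^ ((d k : ℕ) + 1) - p ^ (k : ℕ)) =
      (∏ v : (Finset.image e Finset.univ),
        ∏ i : Fin (Fintype.card {i : Fin n // e i = v.1}),
          ((p : ℕ) ^ (Fintype.card {i : Fin n // e i = v.1}) - p ^ (i : ℕ))) *
      ∏ k : Fin n, (p : ℕ) ^ (c k : ℕ) := by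
  rw [Finset.prod_coe_sort (Finset.image e Finset.univ)
    (fun w => ∏ i : Fin (Fintype.card {i : Fin n // e i = w}),
      ((p : ℕ) ^ (Fintype.card {i : Fin n // e i = w}) - p ^ (i : ℕ)))]
  rw [← Finset.prod_fiberwise_of_maps_to
    (fun k (_ : k ∈ Finset.univ) => Finset.mem_image_of_mem e (Finset.mem_univ k))
    (fun k => (p : ℕ) ^ ((d k : ℕ) + 1) - p ^ (k : ℕ))]
  rw [← Finset.prod_fiberwise_of_maps_to
    (fun k (_ : k ∈ Finset.univ) => Finset.mem_image_of_mem e (Finset.mem_univ k))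
    (fun k => (p : ℕ) ^ (c k : ℕ))]
  rw [← Finset.prod_mul_distrib]
  refine Finset.prod_congr rfl fun v hv => ?_
  obtain ⟨k0, -, rfl⟩ := Finset.mem_image.mp hv
  exact class_prod he hd hc k0

end Final2

/-- With `d k` the largest (0-based) index `l` such that `e l = e k` and
`c k` the smallest such index, the number of automorphisms of
`H_p = ∏ i, ℤ/p^(e i)ℤ` equals
`∏_k (p^(d_k) − p^(k−1)) · ∏_j (p^(e_j))^(n−d_j) · ∏_i (p^(e_i−1))^(n−c_i+1)`,
where in the displayed formula indices are 1-based (so the 1-based `d_k` is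
`(d k : ℕ) + 1`, the 1-based `c_i` is `(c i : ℕ) + 1`, and `p^(k-1) = p^(k : ℕ)`). -/
theorem stmt_16 (p n : ℕ) (hp : p.Prime) (e : Fin n → ℕ)
    (he1 : ∀ i, 1 ≤ e i) (he : Monotone e)
    (d c : Fin n → Fin n)
    (hd : ∀ k, e (d k) = e k ∧ ∀ l, e l = e k → l ≤ d k)
    (hc : ∀ k, e (c k) = e k ∧ ∀ l, e l = e k → c k ≤ l) :
    Nat.card (AddAut (∀ i : Fin n, ZMod (p ^ e i))) =
      (∏ k : Fin n, (p ^ ((d k : ℕ) + 1) - p ^ (k : ℕ))) *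
      (∏ j : Fin n, (p ^ e j) ^ (n - ((d j : ℕ) + 1))) *
      (∏ i : Fin n, (p ^ (e i - 1)) ^ (n - (c i : ℕ))) := by
  haveI : NeZero p := ⟨hp.pos.ne'⟩
  rw [card_aut_eq p e he1, card_blk_unit p e hp]
  simp_rw [card_ker_phi p e he1]
  rw [EQ1 he hd hc, ← EQ2 he hc, EQ3 he hd hc]
  ring
end
end
end

section
/- The number of n×n matrices over F_p of the form (m_{ij}) with m_{ij} = 0 whenever i > d_j (where d_1 ≤ d_2 ≤ ⋯ ≤ d_n with d_k ≥ k) that are invertible equals ∏_{k=1}^n (p^{d_k} − p^{k−1}). -/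
open Submodule

section Aux

variable {K V : Type*} [Field K] [Fintype K] [AddCommGroup V] [Module K V] [Fintype V]

private lemma fiber_card {m : ℕ} (W : Submodule K V) (s : Fin m → V)
    (hs : LinearIndependent K s) (hsW : Submodule.span K (Set.range s) ≤ W) :
    Nat.card {v : V // v ∈ W ∧ v ∉ Submodule.span K (Set.range s)} =
      Nat.card W - Fintype.card K ^ m := by
  classical
  set U := Submodule.span K (Set.range s) with hU
  have e1 : {v : V // v ∈ W ∧ v ∉ U} ≃ {w : W // ¬ ((w : V) ∈ U)} :=
    { toFun := fun v => ⟨⟨v.1, v.2.1⟩, v.2.2⟩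
      invFun := fun w => ⟨w.1.1, w.1.2, w.2⟩
      left_inv := fun v => rfl
      right_inv := fun w => rfl }
  have e2 : {w : W // (w : V) ∈ U} ≃ U :=
    (Equiv.subtypeEquivRight (fun w => (Submodule.mem_comap (f := W.subtype)).symm)).trans
      (Submodule.comapSubtypeEquivOfLe hsW).toEquiv
  have hUcard : Fintype.card U = Fintype.card K ^ m := by
    rw [Module.card_eq_pow_finrank (K := K) (V := U)]
    congr 1
    rw [hU, finrank_span_eq_card hs, Fintype.card_fin]
  rw [Nat.card_congr e1, Nat.card_eq_fintype_card, Nat.card_eq_fintype_card,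
    Fintype.card_subtype_compl, Fintype.card_congr e2, hUcard]

private lemma count_flag : ∀ (m : ℕ) (W : Fin m → Submodule K V), Monotone W →
    Nat.card {s : Fin m → V // (∀ j, s j ∈ W j) ∧ LinearIndependent K s} =
      ∏ j : Fin m, (Nat.card (W j) - Fintype.card K ^ (j : ℕ)) := by
  intro m
  induction m with
  | zero =>
    intro W _
    have : Unique {s : Fin 0 → V // (∀ j, s j ∈ W j) ∧ LinearIndependent K s} :=
      ⟨⟨⟨fun i => i.elim0, fun j => j.elim0, linearIndependent_empty_type⟩⟩,
        fun s => Subtype.ext (funext fun i => i.elim0)⟩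
    rw [Nat.card_unique]
    simp
  | succ m ih =>
    intro W hW
    classical
    set q := Fintype.card K
    have hle : ∀ (s : {s : Fin m → V //
        (∀ j, s j ∈ W j.castSucc) ∧ LinearIndependent K s}),
        Submodule.span K (Set.range s.1) ≤ W (Fin.last m) := by
      intro s
      rw [Submodule.span_le]
      rintro _ ⟨j, rfl⟩
      exact hW (Fin.le_last j.castSucc) (s.2.1 j)
    have E : {s : Fin (m + 1) → V // (∀ j, s j ∈ W j) ∧ LinearIndependent K s} ≃
        Σ s : {s : Fin m → V // (∀ j, s j ∈ W j.castSucc) ∧ LinearIndependent K s},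
          {v : V // v ∈ W (Fin.last m) ∧ v ∉ Submodule.span K (Set.range s.1)} :=
      { toFun := fun t =>
          ⟨⟨Fin.init t.1, fun j => t.2.1 j.castSucc,
            (linearIndependent_fin_succ'.mp t.2.2).1⟩,
            ⟨t.1 (Fin.last m), t.2.1 (Fin.last m),
            (linearIndependent_fin_succ'.mp t.2.2).2⟩⟩
        invFun := fun st =>
          ⟨Fin.snoc st.1.1 st.2.1, by
            refine ⟨fun j => ?_, linearIndependent_fin_snoc.mpr ⟨st.1.2.2, st.2.2.2⟩⟩
            refine Fin.lastCases ?_ (fun j => ?_) j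
            · simpa using st.2.2.1
            · simpa using st.1.2.1 j⟩
        left_inv := fun t => Subtype.ext (Fin.snoc_init_self t.1)
        right_inv := fun ⟨⟨a, ha⟩, ⟨v, hv⟩⟩ => by
          simp only [Sigma.mk.inj_iff]
          constructor
          · ext i
            simp
          · refine (Subtype.heq_iff_coe_eq ?_).mpr ?_
            · intro x
              rw [Fin.init_snoc]
            · simp }
    rw [Nat.card_congr E]
    haveI : ∀ (s : {s : Fin m → V // (∀ j, s j ∈ W j.castSucc) ∧ LinearIndependent K s}),
        Fintype {v : V // v ∈ W (Fin.last m) ∧ v ∉ Submodule.span K (Set.range s.1)} :=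
      fun s => Fintype.ofFinite _
    haveI : Fintype {s : Fin m → V // (∀ j, s j ∈ W j.castSucc) ∧ LinearIndependent K s} :=
      Fintype.ofFinite _
    rw [Nat.card_eq_fintype_card, Fintype.card_sigma]
    have hfib : ∀ (s : {s : Fin m → V //
        (∀ j, s j ∈ W j.castSucc) ∧ LinearIndependent K s}),
        Fintype.card {v : V // v ∈ W (Fin.last m) ∧ v ∉ Submodule.span K (Set.range s.1)} =
          Nat.card (W (Fin.last m)) - q ^ m := by
      intro s
      rw [← Nat.card_eq_fintype_card]
      exact fiber_card (W (Fin.last m)) s.1 s.2.2 (hle s)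
    rw [Finset.sum_congr rfl (fun s _ => hfib s), Finset.sum_const, Finset.card_univ,
      smul_eq_mul, ← Nat.card_eq_fintype_card,
      ih (fun j => W j.castSucc) (fun a b hab => hW (by simpa using hab)),
      Fin.prod_univ_castSucc]
    simp

end Aux

private def coordSub (K : Type*) [Field K] (n c : ℕ) : Submodule K (Fin n → K) where
  carrier := {v | ∀ i : Fin n, c ≤ (i : ℕ) → v i = 0}
  add_mem' := fun ha hb i hi => by simp [ha i hi, hb i hi]
  zero_mem' := fun i _ => rfl
  smul_mem' := fun r v hv i hi => by simp [hv i hi]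

private lemma coordSub_card (K : Type*) [Field K] [Fintype K] {n c : ℕ} (hcn : c ≤ n) :
    Nat.card (coordSub K n c) = Fintype.card K ^ c := by
  classical
  have e : coordSub K n c ≃ (Fin c → K) :=
    { toFun := fun v i => v.1 ⟨i, lt_of_lt_of_le i.2 hcn⟩
      invFun := fun f => ⟨fun i => if h : (i : ℕ) < c then f ⟨i, h⟩ else 0,
        fun i hi => dif_neg (not_lt.mpr hi)⟩
      left_inv := fun v => Subtype.ext (funext fun i => by
        by_cases h : (i : ℕ) < c
        · simp [h]
        · simp [h, v.2 i (not_lt.mp h)])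
      right_inv := fun f => funext fun i => by simp [i.2] }
  rw [Nat.card_congr e, Nat.card_pi]
  simp [Nat.card_eq_fintype_card]

/-- The number of invertible `n × n` matrices over `F_p` of the form
`(m i j)` with `m i j = 0` whenever the (1-based) row index `i` exceeds `d j`
(where `d 1 ≤ ⋯ ≤ d n` and `k ≤ d k ≤ n`) equals `∏_{k=1}^n (p ^ d k - p ^ (k-1))`.
Indices here are 0-based: row `i : Fin n` has 1-based index `i + 1`, and the forced
zeros are at `i + 1 > d j`, i.e. `d j ≤ i`. -/
theorem stmt_19 (p n : ℕ) (hp : p.Prime) (d : Fin n → ℕ)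
    (hmono : Monotone d) (hd1 : ∀ k : Fin n, (k : ℕ) + 1 ≤ d k) (hd2 : ∀ k, d k ≤ n) :
    Nat.card {M : Matrix (Fin n) (Fin n) (ZMod p) //
        (∀ i j : Fin n, d j ≤ (i : ℕ) → M i j = 0) ∧ IsUnit M} =
      ∏ k : Fin n, (p ^ d k - p ^ (k : ℕ)) := by
  haveI : Fact p.Prime := ⟨hp⟩
  classical
  set K := ZMod p
  set W : Fin n → Submodule K (Fin n → K) := fun k => coordSub K n (d k) with hWdef
  have hWmono : Monotone W := by
    intro a b hab v hv i hi
    exact hv i (le_trans (hmono hab) hi)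
  have E : {M : Matrix (Fin n) (Fin n) (ZMod p) //
        (∀ i j : Fin n, d j ≤ (i : ℕ) → M i j = 0) ∧ IsUnit M} ≃
      {s : Fin n → (Fin n → K) // (∀ j, s j ∈ W j) ∧ LinearIndependent K s} :=
    { toFun := fun M => ⟨fun j => Matrix.transpose M.1 j,
        ⟨fun j i hi => M.2.1 i j hi, Matrix.linearIndependent_cols_iff_isUnit.mpr M.2.2⟩⟩
      invFun := fun s => ⟨Matrix.of (fun i j => s.1 j i),
        ⟨fun i j hi => s.2.1 j i hi,
          Matrix.linearIndependent_cols_iff_isUnit.mp s.2.2⟩⟩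
      left_inv := fun M => rfl
      right_inv := fun s => rfl }
  rw [Nat.card_congr E, count_flag n W hWmono]
  refine Finset.prod_congr rfl (fun k _ => ?_)
  rw [hWdef, coordSub_card K (hd2 k), ZMod.card p]
end
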